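/- arXiv:1102.0402 — 4 statements merged into one kernel-verified Lean document; each statement's English description precedes it below -/
import Mathlib

section
/- For monic polynomials orthogonal with respect to e^{-x^2} on (a,b) with subleading coefficient p_1(n,a,b), one has ∂_b p_1(n,a,b) = −e^{-b^2} P_n(b,a,b) P_{n-1}(b,a,b) / h_{n-1}(a,b) and ∂_a p_1(n,a,b) = e^{-a^2} P_n(a,a,b) P_{n-1}(a,a,b) / h_{n-1}(a,b). -/
/-!
Write `w(x) = e^{-x²}`. Differentiating the orthogonality relation
`∫_a^t P_n(x,a,t) P_{n-1}(x,a,t) w(x) dx = 0` in `t` at `t = b` gives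
`0 = w(b) P_n(b) P_{n-1}(b) + ∫_a^b (∂_b P_n) P_{n-1} w + ∫_a^b P_n (∂_b P_{n-1}) w`.
As the polynomials are monic, `∂_b P_n` has degree `< n` and leading term `∂_b p₁ x^{n-1}`,
so the first integral is `∂_b p₁ · h_{n-1}`, while `∂_b P_{n-1}` has degree `< n - 1` and is
orthogonal to `P_n`. The endpoint `a` is handled in the same way, integrating from `b`.

The `t`-dependence of the integrand enters only through finitely many coefficients, so the Leibniz
rule reduces to the fundamental theorem of calculus for the moments `∫ x^k w`.
-/

open MeasureTheory Polynomial Filter Topology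

section MonicFamily

variable {R M : Type*} [CommRing R] [AddCommGroup M] [Module R M]
  {Q : ℕ → R[X]} {L : R[X] →ₗ[R] M}

theorem degree_sub_C_coeff_mul_lt {q P : R[X]} {m : ℕ} (hP : P.Monic) (hdeg : P.natDegree = m)
    (hq : q.degree ≤ m) : (q - C (q.coeff m) * P).degree < m := by
  rw [degree_lt_iff_coeff_zero]
  intro j hj
  rcases hj.eq_or_lt with rfl | hlt
  · simp [← hdeg, hP.coeff_natDegree]
  · have hqj : q.coeff j = 0 := coeff_eq_zero_of_degree_lt (hq.trans_lt (by exact_mod_cast hlt))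
    have hPj : P.coeff j = 0 := coeff_eq_zero_of_natDegree_lt (hdeg ▸ hlt)
    simp [hqj, hPj]

variable (hmonic : ∀ m, (Q m).Monic) (hdeg : ∀ m, (Q m).natDegree = m)
include hmonic hdeg

theorem map_eq_zero_of_degree_lt {N : ℕ} (hL : ∀ j < N, L (Q j) = 0) {q : R[X]}
    (hq : q.degree < N) : L q = 0 := by
  induction N generalizing q with
  | zero =>
    have : q = 0 := ext fun k => (degree_lt_iff_coeff_zero q 0).1 hq k k.zero_le
    simp [this]
  | succ N ih =>
    have hqN : q.degree ≤ N := Order.le_of_lt_succ hq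
    have hr := degree_sub_C_coeff_mul_lt (hmonic N) (hdeg N) hqN
    rw [← sub_add_cancel q (C (q.coeff N) * Q N), map_add,
      ih (fun j hj => hL j (hj.trans N.lt_succ_self)) hr, C_mul', map_smul, hL N N.lt_succ_self,
      smul_zero, add_zero]

theorem map_eq_coeff_smul {m : ℕ} (hL : ∀ j < m, L (Q j) = 0) {q : R[X]} (hq : q.degree ≤ m) :
    L q = q.coeff m • L (Q m) := by
  conv_lhs => rw [← sub_add_cancel q (C (q.coeff m) * Q m)]
  rw [map_add, map_eq_zero_of_degree_lt hmonic hdeg hL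
    (degree_sub_C_coeff_mul_lt (hmonic m) (hdeg m) hq), zero_add, C_mul', map_smul]

end MonicFamily

def HasCoeffDerivAt (p : ℝ → ℝ[X]) (p' : ℝ[X]) (t : ℝ) : Prop :=
  ∀ k, HasDerivAt (fun s => (p s).coeff k) (p'.coeff k) t

namespace HasCoeffDerivAt

variable {p q : ℝ → ℝ[X]} {p' q' : ℝ[X]} {t : ℝ}

theorem coeff_eq_zero (hp : HasCoeffDerivAt p p' t) {k : ℕ} {c : ℝ}
    (hk : ∀ s, (p s).coeff k = c) : p'.coeff k = 0 :=
  (hp k).unique (by simpa only [hk] using hasDerivAt_const t c)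

theorem natDegree_le (hp : HasCoeffDerivAt p p' t) {N : ℕ} (hN : ∀ s, (p s).natDegree ≤ N) :
    p'.natDegree ≤ N :=
  natDegree_le_iff_coeff_eq_zero.2 fun _ hk =>
    hp.coeff_eq_zero fun s => coeff_eq_zero_of_natDegree_lt ((hN s).trans_lt hk)

theorem degree_lt (hp : HasCoeffDerivAt p p' t) {m : ℕ} (hmonic : ∀ s, (p s).Monic)
    (hdeg : ∀ s, (p s).natDegree = m) : p'.degree < m := by
  rw [degree_lt_iff_coeff_zero]
  intro k hk
  rcases hk.eq_or_lt with rfl | hlt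
  · exact hp.coeff_eq_zero (c := 1) fun s => by rw [← hdeg s, (hmonic s).coeff_natDegree]
  · exact hp.coeff_eq_zero fun s => coeff_eq_zero_of_natDegree_lt (hdeg s ▸ hlt)

theorem mul (hp : HasCoeffDerivAt p p' t) (hq : HasCoeffDerivAt q q' t) :
    HasCoeffDerivAt (fun s => p s * q s) (p' * q t + p t * q') t := by
  intro k
  simp only [coeff_add, coeff_mul, ← Finset.sum_add_distrib]
  exact HasDerivAt.fun_sum fun x _ => (hp x.1).mul (hq x.2)

theorem _root_.exists_hasCoeffDerivAt {N : ℕ} (hN : ∀ s, (p s).natDegree ≤ N)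
    (hp : ∀ k, DifferentiableAt ℝ (fun s => (p s).coeff k) t) :
    ∃ p', HasCoeffDerivAt p p' t := by
  classical
  refine ⟨∑ i ∈ Finset.range (N + 1), monomial i (deriv (fun s => (p s).coeff i) t),
    fun k => ?_⟩
  simp only [finsetSum_coeff, coeff_monomial, Finset.sum_ite_eq', Finset.mem_range]
  split_ifs with hk
  · exact (hp k).hasDerivAt
  · simpa only [coeff_eq_zero_of_natDegree_lt ((hN _).trans_lt (not_lt.1 hk))]
      using hasDerivAt_const t (0 : ℝ)

end HasCoeffDerivAt

section WeightedIntegral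

variable {f : ℝ → ℝ} (hf : Continuous f)
include hf

theorem intervalIntegrable_eval_mul (q : ℝ[X]) (a b : ℝ) :
    IntervalIntegrable (fun x => q.eval x * f x) volume a b :=
  (q.continuous.mul hf).intervalIntegrable a b

noncomputable def weightedPairing (a b : ℝ) (p : ℝ[X]) : ℝ[X] →ₗ[ℝ] ℝ where
  toFun q := ∫ x in a..b, (p * q).eval x * f x
  map_add' q r := by
    simp only [mul_add, eval_add, add_mul]
    exact intervalIntegral.integral_add (intervalIntegrable_eval_mul hf _ a b)
      (intervalIntegrable_eval_mul hf _ a b)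
  map_smul' c q := by
    simp only [mul_smul_comm, eval_smul, smul_eq_mul, mul_assoc, RingHom.id_apply]
    exact intervalIntegral.integral_const_mul c _

theorem integral_eval_mul_eq_sum_moments {q : ℝ[X]} {N : ℕ} (hq : q.natDegree ≤ N)
    (a b : ℝ) :
    ∫ x in a..b, q.eval x * f x
      = ∑ k ∈ Finset.range (N + 1), q.coeff k * ∫ x in a..b, x ^ k * f x := by
  simp only [eval_eq_sum_range' (Nat.lt_succ_of_le hq), Finset.sum_mul, mul_assoc]
  rw [intervalIntegral.integral_finsetSum fun k _ =>
    ((intervalIntegrable_eval_mul hf (X ^ k) a b).congr fun x _ => by simp).const_mul _]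
  simp only [intervalIntegral.integral_const_mul]

theorem hasDerivAt_integral_eval_mul {p : ℝ → ℝ[X]} {p' : ℝ[X]} {t : ℝ} {N : ℕ}
    (hp : HasCoeffDerivAt p p' t) (hN : ∀ s, (p s).natDegree ≤ N) (c : ℝ) :
    HasDerivAt (fun s => ∫ x in c..s, (p s).eval x * f x)
      ((p t).eval t * f t + ∫ x in c..t, p'.eval x * f x) t := by
  have hmoment (k : ℕ) : HasDerivAt (fun s => ∫ x in c..s, x ^ k * f x) (t ^ k * f t) t :=
    have hk : Continuous fun x => x ^ k * f x := (continuous_pow k).mul hf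
    intervalIntegral.integral_hasDerivAt_right (hk.intervalIntegrable _ _)
      (hk.stronglyMeasurableAtFilter _ _) hk.continuousAt
  have hsum := HasDerivAt.fun_sum (u := Finset.range (N + 1))
    fun k _ => (hp k).fun_mul (hmoment k)
  rw [funext fun s => integral_eval_mul_eq_sum_moments hf (hN s) c s]
  refine hsum.congr_deriv ?_
  rw [Finset.sum_add_distrib, ← integral_eval_mul_eq_sum_moments hf (hp.natDegree_le hN),
    eval_eq_sum_range' (Nat.lt_succ_of_le (hN t)), Finset.sum_mul, add_comm]
  congr 1
  exact Finset.sum_congr rfl fun k _ => by ring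

theorem hasDerivAt_coeff_of_orthogonal {p : ℝ → ℕ → ℝ[X]} {c t : ℝ} {n : ℕ}
    (hmonic : ∀ s m, (p s m).Monic) (hdeg : ∀ s m, (p s m).natDegree = m)
    (hdiff : ∀ m k, DifferentiableAt ℝ (fun s => (p s m).coeff k) t)
    (horth : ∀ i j, i ≠ j → ∫ x in c..t, (p t i * p t j).eval x * f x = 0)
    (hvanish : ∀ᶠ s in 𝓝 t, ∫ x in c..s, (p s (n + 1) * p s n).eval x * f x = 0)
    (hnorm : ∫ x in c..t, (p t n * p t n).eval x * f x ≠ 0) :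
    HasDerivAt (fun s => (p s (n + 1)).coeff n)
      (-((p t (n + 1) * p t n).eval t * f t) / ∫ x in c..t, (p t n * p t n).eval x * f x) t := by
  obtain ⟨D, hD⟩ := exists_hasCoeffDerivAt (fun s => (hdeg s (n + 1)).le) (hdiff (n + 1))
  obtain ⟨E, hE⟩ := exists_hasCoeffDerivAt (fun s => (hdeg s n).le) (hdiff n)
  have hderiv := hasDerivAt_integral_eval_mul hf (hD.mul hE)
    (fun s => natDegree_mul_le.trans (by rw [hdeg, hdeg])) c
  have hzero : HasDerivAt (fun s => ∫ x in c..s, (p s (n + 1) * p s n).eval x * f x) 0 t :=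
    (hasDerivAt_const t 0).congr_of_eventuallyEq hvanish
  have hD_term : ∫ x in c..t, (p t n * D).eval x * f x
      = D.coeff n * ∫ x in c..t, (p t n * p t n).eval x * f x :=
    map_eq_coeff_smul (L := weightedPairing hf c t (p t n)) (hmonic t) (hdeg t)
      (fun j hj => horth n j hj.ne') (Order.le_of_lt_succ (hD.degree_lt (hmonic · _) (hdeg · _)))
  have hE_term : ∫ x in c..t, (p t (n + 1) * E).eval x * f x = 0 :=
    map_eq_zero_of_degree_lt (L := weightedPairing hf c t (p t (n + 1))) (N := n + 1) (hmonic t)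
      (hdeg t) (fun j hj => horth (n + 1) j hj.ne')
      ((hE.degree_lt (hmonic · _) (hdeg · _)).trans (by exact_mod_cast n.lt_succ_self))
  have hsum := hderiv.unique hzero
  simp only [eval_add, add_mul] at hsum
  rw [intervalIntegral.integral_add (intervalIntegrable_eval_mul hf _ c t)
    (intervalIntegrable_eval_mul hf _ c t), mul_comm D, hD_term, hE_term] at hsum
  refine (hD n).congr_deriv ?_
  rw [eq_div_iff hnorm]
  linarith

end WeightedIntegral

theorem intervalIntegral_eq_integral_Ioo {g : ℝ → ℝ} {a b : ℝ} (hab : a ≤ b) :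
    ∫ x in a..b, g x = ∫ x in Set.Ioo a b, g x := by
  rw [intervalIntegral.integral_of_le hab, integral_Ioc_eq_integral_Ioo]

/-- For monic polynomials orthogonal with respect to e^{-x²} on (a,b), the
subleading coefficient p₁(n,a,b) satisfies
∂_b p₁(n,a,b) = −e^{-b²} P_n(b) P_{n-1}(b)/h_{n-1} and
∂_a p₁(n,a,b) = e^{-a²} P_n(a) P_{n-1}(a)/h_{n-1}. -/
theorem deriv_p1_gaussian
    (n : ℕ) (hn : 1 ≤ n) (P : ℕ → ℝ → ℝ → Polynomial ℝ)
    (hmonic : ∀ m a b, (P m a b).Monic) (hdeg : ∀ m a b, (P m a b).natDegree = m)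
    (horth : ∀ i j a b, a < b → i ≠ j →
      ∫ x in Set.Ioo a b,
        (P i a b).eval x * (P j a b).eval x * Real.exp (-x ^ 2) = 0)
    (hsmootha : ∀ m k b, Differentiable ℝ fun a => (P m a b).coeff k)
    (hsmoothb : ∀ m k a, Differentiable ℝ fun b => (P m a b).coeff k)
    (a b : ℝ) (hab : a < b)
    (hnm1 : ℝ)
    (hhnm1 : hnm1 =
      ∫ x in Set.Ioo a b, (P (n - 1) a b).eval x ^ 2 * Real.exp (-x ^ 2))
    (hpos : 0 < hnm1) :
    HasDerivAt (fun t => (P n a t).coeff (n - 1))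
        (-(Real.exp (-b ^ 2) * (P n a b).eval b * (P (n - 1) a b).eval b) / hnm1)
        b ∧
      HasDerivAt (fun s => (P n s b).coeff (n - 1))
        (Real.exp (-a ^ 2) * (P n a b).eval a * (P (n - 1) a b).eval a / hnm1)
        a := by
  obtain ⟨k, rfl⟩ := Nat.exists_eq_add_of_le' hn
  simp only [Nat.add_sub_cancel] at hhnm1 ⊢
  have hw : Continuous fun x : ℝ => Real.exp (-x ^ 2) := by fun_prop
  have horth' : ∀ i j s t, s < t → i ≠ j →
      ∫ x in s..t, (P i s t * P j s t).eval x * Real.exp (-x ^ 2) = 0 := fun i j s t hst hij => by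
    simpa only [intervalIntegral_eq_integral_Ioo hst.le, eval_mul] using horth i j s t hst hij
  have hnorm : ∫ x in a..b, (P k a b * P k a b).eval x * Real.exp (-x ^ 2) = hnm1 := by
    simp only [intervalIntegral_eq_integral_Ioo hab.le, hhnm1, eval_mul, sq]
  constructor
  · have h := hasDerivAt_coeff_of_orthogonal hw (p := fun t m => P m a t) (c := a) (n := k)
      (fun t m => hmonic m a t) (fun t m => hdeg m a t) (fun m j => hsmoothb m j a b)
      (fun i j => horth' i j a b hab) ((eventually_gt_nhds hab).mono fun t ht =>
        horth' (k + 1) k a t ht (by omega)) (hnorm ▸ hpos.ne')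
    rw [hnorm, eval_mul] at h
    convert h using 2
    ring
  · have horth_symm : ∀ i j s t, s < t → i ≠ j →
        ∫ x in t..s, (P i s t * P j s t).eval x * Real.exp (-x ^ 2) = 0 :=
      fun i j s t hst hij => by
      rw [intervalIntegral.integral_symm, horth' i j s t hst hij, neg_zero]
    have h := hasDerivAt_coeff_of_orthogonal hw (p := fun s m => P m s b) (c := b) (n := k)
      (fun s m => hmonic m s b) (fun s m => hdeg m s b) (fun m j => hsmootha m j b a)
      (fun i j => horth_symm i j a b hab) ((eventually_lt_nhds hab).mono fun s hs =>
        horth_symm (k + 1) k s b hs (by omega))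
      (by rw [intervalIntegral.integral_symm, hnorm]; exact neg_ne_zero.2 hpos.ne')
    rw [intervalIntegral.integral_symm, hnorm, eval_mul, neg_div_neg_eq] at h
    convert h using 2
    ring
end

section
/- Given the GUE relations H_n = 2a r_{n,a} + 2b r_{n,b} − 2 r_{n,a}^2/R_{n,a} − 2 r_{n,b}^2/R_{n,b} − 2β_n(R_{n,a} + R_{n,b}), ∂_a H_n = 2 r_{n,a}, ∂_b H_n = 2 r_{n,b}, 4β_n = 2n + ∂_a H_n + ∂_b H_n, and the quadratic relations (∂_a² H_n + ∂_a∂_b H_n) = (∂_a H_n)²/R_{n,a} − (2n + ∂_a H_n + ∂_b H_n) R_{n,a} and (∂_b² H_n + ∂_a∂_b H_n) = (∂_b H_n)²/R_{n,b} − (2n + ∂_a H_n + ∂_b H_n) R_{n,b}, with R_{n,a} > 0, R_{n,b} < 0, and 2n + ∂_a H_n + ∂_b H_n > 0, it follows that 2b ∂_b H_n + 2a ∂_a H_n − 2H_n = √((∂_a²H_n + ∂_a∂_bH_n)² + 4(∂_a H_n)²(2n + ∂_a H_n + ∂_b H_n)) − √((∂_b²H_n + ∂_a∂_bH_n)² +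 4(∂_b H_n)²(2n + ∂_a H_n + ∂_b H_n)). -/
/-!
Each quadratic relation expresses `∂²H + ∂_a∂_b H` as `u - v` with `u = (∂H)²/R` and `v = (2n + ∂_a H + ∂_b H) R`,
and `uv = (∂H)²(2n + ∂_a H + ∂_b H)` no longer involves `R`. Hence each radicand is `(u - v)² + 4uv = (u + v)²`,
and the signs of `R_{n,a}` and `R_{n,b}` decide which of `±(u + v)` the square roots are. What remains is linear
in `β_n` and is the defining relation `4β_n = 2n + ∂_a H_n + ∂_b H_n`.
-/

theorem sqrt_div_sub_mul_sq_add_four_mul {x c R : ℝ} (hR : R ≠ 0) :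
    √((x / R - c * R) ^ 2 + 4 * x * c) = |x / R + c * R| := by
  rw [← Real.sqrt_sq_eq_abs]
  congr 1
  field_simp
  ring

theorem sqrt_div_sub_mul_sq_add_four_mul_of_pos {x c R : ℝ} (hx : 0 ≤ x) (hc : 0 ≤ c)
    (hR : 0 < R) : √((x / R - c * R) ^ 2 + 4 * x * c) = x / R + c * R := by
  rw [sqrt_div_sub_mul_sq_add_four_mul hR.ne', abs_of_nonneg]
  exact add_nonneg (div_nonneg hx hR.le) (mul_nonneg hc hR.le)

theorem sqrt_div_sub_mul_sq_add_four_mul_of_neg {x c R : ℝ} (hx : 0 ≤ x) (hc : 0 ≤ c)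
    (hR : R < 0) : √((x / R - c * R) ^ 2 + 4 * x * c) = -(x / R + c * R) := by
  rw [sqrt_div_sub_mul_sq_add_four_mul hR.ne, abs_of_nonpos]
  exact add_nonpos (div_nonpos_of_nonneg_of_nonpos hx hR.le) (mul_nonpos_of_nonneg_of_nonpos hc hR.le)

/-- The square-root form of the GUE partial differential equation. -/
theorem gue_sqrt_identity
    (n : ℕ) (a b H Ha Hb Haa Hbb Hab rna rnb Rna Rnb β : ℝ)
    (hRa : 0 < Rna) (hRb : Rnb < 0)
    (hH : H = 2 * a * rna + 2 * b * rnb - 2 * rna ^ 2 / Rna -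
      2 * rnb ^ 2 / Rnb - 2 * β * (Rna + Rnb))
    (hHa : Ha = 2 * rna) (hHb : Hb = 2 * rnb)
    (hβ : 4 * β = 2 * n + Ha + Hb)
    (hpos : 0 < 2 * n + Ha + Hb)
    (hq1 : Haa + Hab = Ha ^ 2 / Rna - (2 * n + Ha + Hb) * Rna)
    (hq2 : Hbb + Hab = Hb ^ 2 / Rnb - (2 * n + Ha + Hb) * Rnb) :
    2 * b * Hb + 2 * a * Ha - 2 * H =
      Real.sqrt ((Haa + Hab) ^ 2 + 4 * Ha ^ 2 * (2 * n + Ha + Hb)) -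
        Real.sqrt ((Hbb + Hab) ^ 2 + 4 * Hb ^ 2 * (2 * n + Ha + Hb)) := by
  rw [hq1, hq2, sqrt_div_sub_mul_sq_add_four_mul_of_pos (sq_nonneg Ha) hpos.le hRa,
    sqrt_div_sub_mul_sq_add_four_mul_of_neg (sq_nonneg Hb) hpos.le hRb]
  subst hH hHa hHb
  linear_combination (Rna + Rnb) * hβ
end

section
/- Suppose f and g are twice differentiable real functions satisfying (1/4)(f''(x))² = 2√2 c³ f(x) f'(x) − 2√2 c³ x (f'(x))² − (f'(x))³ and (1/4)(g''(y))² = 2√2 c³ g(y) g'(y) − 2√2 c³ y (g'(y))² + (g'(y))³, for a constant c > 0. Then H̃(x,y) := f(x) + g(y) satisfies the limiting GUE PDE: −8√2 c³ H̃ ∂_y H̃ ∂_x H̃ + 8√2 c³ y (∂_y H̃)² ∂_x H̃ − 4(∂_y H̃)³ ∂_x H̃ + ∂_x H̃ (∂_y² H̃ − ∂_x∂_y H̃)² + ∂_y H̃ (8√2 c³ x (∂_x H̃)² + 4(∂_x H̃)³ + (∂_x∂_y H̃ − ∂_x² H̃)²) = 0. -/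
/-- The factorized ansatz H̃(x,y) = f(x) + g(y), with f and g solving the
σ-Painlevé II type ODEs, satisfies the limiting GUE PDE. -/
theorem gue_limiting_pde_ansatz
    (c : ℝ) (hc : 0 < c) (f g : ℝ → ℝ)
    (hf : ContDiff ℝ 2 f) (hg : ContDiff ℝ 2 g)
    (hfe : ∀ x, (1 / 4) * (deriv (deriv f) x) ^ 2 =
      2 * Real.sqrt 2 * c ^ 3 * f x * deriv f x -
        2 * Real.sqrt 2 * c ^ 3 * x * (deriv f x) ^ 2 - (deriv f x) ^ 3)
    (hge : ∀ y, (1 / 4) * (deriv (deriv g) y) ^ 2 =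
      2 * Real.sqrt 2 * c ^ 3 * g y * deriv g y -
        2 * Real.sqrt 2 * c ^ 3 * y * (deriv g y) ^ 2 + (deriv g y) ^ 3) :
    ∀ x y,
      let H : ℝ → ℝ → ℝ := fun s t => f s + g t
      let Hx := deriv (fun s => H s y) x
      let Hy := deriv (fun t => H x t) y
      let Hxx := deriv (deriv fun s => H s y) x
      let Hyy := deriv (deriv fun t => H x t) y
      let Hxy := deriv (fun t => deriv (fun s => H s t) x) y;
      -8 * Real.sqrt 2 * c ^ 3 * H x y * Hy * Hx +
          8 * Real.sqrt 2 * c ^ 3 * y * Hy ^ 2 * Hx - 4 * Hy ^ 3 * Hx +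
          Hx * (Hyy - Hxy) ^ 2 +
          Hy * (8 * Real.sqrt 2 * c ^ 3 * x * Hx ^ 2 + 4 * Hx ^ 3 +
            (Hxy - Hxx) ^ 2) = 0 := by
  intro x y H Hx Hy Hxx Hyy Hxy
  have hx : Hx = deriv f x := by
    simp only [Hx, H, deriv_add_const]
  have hy : Hy = deriv g y := by
    simp only [Hy, H, deriv_const_add]
  have hxx : Hxx = deriv (deriv f) x := by
    have : (deriv fun s => H s y) = deriv f := by
      funext s; simp [H, deriv_add_const]
    simp only [Hxx, this]
  have hyy : Hyy = deriv (deriv g) y := by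
    have : (deriv fun t => H x t) = deriv g := by
      funext t; simp [H, deriv_const_add]
    simp only [Hyy, this]
  have hxy : Hxy = 0 := by
    have : (fun t => deriv (fun s => H s t) x) = fun _ => deriv f x := by
      funext t; simp [H, deriv_add_const]
    simp only [Hxy, this, deriv_const]
  rw [hx, hy, hxx, hyy, hxy]
  have h1 := hfe x
  have h2 := hge y
  simp only [H]
  linear_combination 4 * deriv f x * h2 + 4 * deriv g y * h1
end

section
/- For the Laguerre weight w(x) = x^α e^{-x} on (a,b), the recurrence coefficients satisfy the two-variable Toda-type equations (a∂_a + b∂_b) β_n = β_n (α_{n-1} − α_n + 2) and (a∂_a + b∂_b − 1) α_n = β_n − β_{n+1}. -/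
/-- Two-variable Toda equations for the recurrence coefficients in the LUE case:
(a∂_a + b∂_b) β_n = β_n(α_{n-1} − α_n + 2) and (a∂_a + b∂_b − 1) α_n = β_n − β_{n+1}. -/
theorem lue_toda_equations
    (α0 : ℝ) (hα0 : 0 < α0)
    (β αn R Ra Rb r ra rb : ℕ → ℝ → ℝ → ℝ)
    (hβpos : ∀ n x y, 0 < β n x y)
    (hlogβa : ∀ n x y, HasDerivAt (fun s => Real.log (β (n + 1) s y))
      (Ra n x y - Ra (n + 1) x y) x)
    (hlogβb : ∀ n x y, HasDerivAt (fun s => Real.log (β (n + 1) x s))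
      (Rb n x y - Rb (n + 1) x y) y)
    (hαa : ∀ n x y, HasDerivAt (fun s => αn n s y)
      (ra n x y - ra (n + 1) x y) x)
    (hαb : ∀ n x y, HasDerivAt (fun s => αn n x s)
      (rb n x y - rb (n + 1) x y) y)
    (hαR : ∀ n x y, αn n x y = α0 + x * Ra n x y + y * Rb n x y + 2 * n + 1)
    (hrsum : ∀ n x y, r n x y + ra n x y + rb n x y = -(n : ℝ))
    (hRsum : ∀ n x y, R n x y + Ra n x y + Rb n x y = 1)
    (h12 : ∀ n x y, αn (n + 1) x y * (r (n + 1) x y - r (n + 2) x y) =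
      β (n + 2) x y * R (n + 2) x y - β (n + 1) x y * R n x y)
    (h13 : ∀ n x y, (x - αn (n + 1) x y) * (ra (n + 2) x y - ra (n + 1) x y) =
      β (n + 2) x y * Ra (n + 2) x y - β (n + 1) x y * Ra n x y)
    (h14 : ∀ n x y, (y - αn (n + 1) x y) * (rb (n + 2) x y - rb (n + 1) x y) =
      β (n + 2) x y * Rb (n + 2) x y - β (n + 1) x y * Rb n x y)
    (n : ℕ) (a b : ℝ) :
    a * deriv (fun s => β (n + 1) s b) a + b * deriv (fun s => β (n + 1) a s) b =
      β (n + 1) a b * (αn n a b - αn (n + 1) a b + 2) ∧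
    a * deriv (fun s => αn (n + 1) s b) a + b * deriv (fun s => αn (n + 1) a s) b -
        αn (n + 1) a b =
      β (n + 1) a b - β (n + 2) a b := by

  have hβa : HasDerivAt (fun s => β (n + 1) s b)
      (β (n + 1) a b * (Ra n a b - Ra (n + 1) a b)) a := by
    have h := (hlogβa n a b).exp
    have h2 : (fun s => Real.exp (Real.log (β (n + 1) s b))) = fun s => β (n + 1) s b :=
      funext fun s => Real.exp_log (hβpos _ _ _)
    rw [h2, Real.exp_log (hβpos _ _ _)] at h
    exact h
  have hβb : HasDerivAt (fun s => β (n + 1) a s)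
      (β (n + 1) a b * (Rb n a b - Rb (n + 1) a b)) b := by
    have h := (hlogβb n a b).exp
    have h2 : (fun s => Real.exp (Real.log (β (n + 1) a s))) = fun s => β (n + 1) a s :=
      funext fun s => Real.exp_log (hβpos _ _ _)
    rw [h2, Real.exp_log (hβpos _ _ _)] at h
    exact h
  rw [hβa.deriv, hβb.deriv, (hαa (n + 1) a b).deriv, (hαb (n + 1) a b).deriv]
  constructor
  · have h1 := hαR n a b
    have h2 := hαR (n + 1) a b
    push_cast at h1 h2
    linear_combination β (n + 1) a b * h2 - β (n + 1) a b * h1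
  · have e13 := h13 n a b
    have e14 := h14 n a b
    have e12 := h12 n a b
    have s1 := hrsum (n + 1) a b
    have s2 := hrsum (n + 2) a b
    have R2 := hRsum (n + 2) a b
    have R0 := hRsum n a b
    push_cast at s1 s2
    linear_combination -e13 - e14 - e12 -
      β (n + 2) a b * R2 + β (n + 1) a b * R0 -
      αn (n + 1) a b * (s2 - s1)
end
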